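/- arXiv:2112.10775 — 3 statements merged into one kernel-verified Lean document; each statement's English description precedes it below -/
import Mathlib

section
/- Let E be a real inner product space, N ≥ 1 and K ≥ 2 natural numbers, η_l > 0 a step size, and θ ∈ E. Let F_1, …, F_N : E → ℝ be differentiable functions and set F = (1/N)·∑_{i=1}^N F_i, and suppose F attains its infimum F* = inf F. Assume: (i) relaxed bounded gradient dissimilarity for convex objectives: (1/N)·∑_{i=1}^N ‖∇F_i(θ)‖² ≤ G² + 2βB²·(F(θ) − F*) for constants G ≥ 0, B ≥ 1, β > 0; (ii) bounded gradient difference: ‖∇F_i(ψ) − ∇F_i(θ)‖ ≤ ((N−1)/N)·ε for every i and every ψ ∈ E, where ε ≥ 0. On a probability space (Ω, ℱ, P) with filtration (ℱ_k)_{k=0}^K, for each client i define random iterates θ_{i,0} = θ (constant) and θ_{i,k} = θ_{i,k−1} − η_l·G_{i,k}, where G_{i,k} is ℱ_k-measurable, E[G_{i,k} | ℱ_{k−1}] = ∇F_i(θ_{i,k−1}) almost surely, and E[‖G_{i,k} − ∇F_i(θ_{i,k−1})‖² | ℱ_{k−1}] ≤ σ² almost surely. Then the overall drift Γ := (1/(KN))·∑_{k=1}^K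 ∑_{i=1}^N E[‖θ_{i,k} − θ‖²] satisfies Γ ≤ 4K²η_l²G² + 8βK²η_l²B²·(F(θ) − F*) + 4K²η_l²ε²(N−1)²/N² + 2Kη_l²σ². -/
/-!
After `k` local steps, `θ_{i,k} - θ = -η_l ∑_{j ≤ k} G_{i,j}`. Split each `G_{i,j}` into its
conditional mean `∇Fᵢ(θ_{i,j-1})` and a martingale difference. With `c = (N-1)ε/N`, the
gradient-difference bound gives `‖∇Fᵢ(θ_{i,j-1})‖ ≤ ‖∇Fᵢ(θ)‖ + c`, so the sum of the means has norm
at most `k(‖∇Fᵢ(θ)‖ + c)`; the martingale differences are orthogonal in `L²`, so the second moment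
of their sum is at most `kσ²`. Hence `E‖θ_{i,k} - θ‖² ≤ 2η_l²(k²(‖∇Fᵢ(θ)‖ + c)² + kσ²)`, and
averaging over `i` and `k` and applying the dissimilarity bound gives the claim.
-/

open MeasureTheory
open Finset
open scoped RealInnerProductSpace

theorem norm_add_sq_le_two_mul {E : Type*} [SeminormedAddCommGroup E] (x y : E) :
    ‖x + y‖ ^ 2 ≤ 2 * ‖x‖ ^ 2 + 2 * ‖y‖ ^ 2 := by
  nlinarith [norm_add_le x y, norm_nonneg (x + y), add_sq_le (a := ‖x‖) (b := ‖y‖)]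

theorem eq_sub_smul_sum_range_of_eq_sub_smul {R M : Type*} [Ring R] [AddCommGroup M] [Module R M]
    {x v : ℕ → M} {K : ℕ} {η : R} (hx : ∀ k, 1 ≤ k → k ≤ K → x k = x (k - 1) - η • v k)
    {k : ℕ} (hk : k ≤ K) : x k = x 0 - η • ∑ j ∈ range k, v (j + 1) := by
  induction k with
  | zero => simp
  | succ k ih =>
    rw [hx (k + 1) (by omega) hk, Nat.add_sub_cancel, ih (by omega), sum_range_succ, smul_add,
      sub_sub]

theorem mean_le_of_forall_le {N K : ℕ} (hK : K ≠ 0) {x : ℕ → Fin N → ℝ} {b : Fin N → ℝ}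
    (h : ∀ k ∈ Icc 1 K, ∀ i, x k i ≤ b i) :
    1 / (K * N) * ∑ k ∈ Icc 1 K, ∑ i, x k i ≤ 1 / N * ∑ i, b i :=
  calc 1 / (K * N) * ∑ k ∈ Icc 1 K, ∑ i, x k i ≤ 1 / (K * N) * ∑ _k ∈ Icc 1 K, ∑ i, b i := by
        gcongr with k hk i
        exact h k hk i
    _ = 1 / N * ∑ i, b i := by
        rw [sum_const, Nat.card_Icc, Nat.add_sub_cancel, nsmul_eq_mul]
        field_simp

namespace MeasureTheory

variable {Ω E : Type*} {mΩ : MeasurableSpace Ω} {μ : Measure Ω}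

section NormedSpace

variable [NormedAddCommGroup E]

theorem integral_norm_sq_le_of_ae_norm_le [IsProbabilityMeasure μ] {f : Ω → E} {C : ℝ}
    (hf : ∀ᵐ ω ∂μ, ‖f ω‖ ≤ C) : ∫ ω, ‖f ω‖ ^ 2 ∂μ ≤ C ^ 2 :=
  calc ∫ ω, ‖f ω‖ ^ 2 ∂μ ≤ ∫ _, C ^ 2 ∂μ :=
        integral_mono_of_nonneg (ae_of_all _ fun _ => by positivity) (integrable_const _)
          (hf.mono fun _ hω => pow_le_pow_left₀ (norm_nonneg _) hω 2)
    _ = C ^ 2 := by simp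

variable [NormedSpace ℝ E]

theorem integral_norm_sub_condExp_sq_le [IsProbabilityMeasure μ] {m : MeasurableSpace Ω}
    (hm : m ≤ mΩ) {v h : Ω → E} {s : ℝ} (hmean : μ[v|m] =ᵐ[μ] h)
    (hvar : ∀ᵐ ω ∂μ, μ[fun ω' => ‖v ω' - h ω'‖ ^ 2|m] ω ≤ s) :
    ∫ ω, ‖v ω - μ[v|m] ω‖ ^ 2 ∂μ ≤ s :=
  calc ∫ ω, ‖v ω - μ[v|m] ω‖ ^ 2 ∂μ = ∫ ω, μ[fun ω' => ‖v ω' - h ω'‖ ^ 2|m] ω ∂μ := by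
        rw [integral_condExp hm]
        refine integral_congr_ae ?_
        filter_upwards [hmean] with ω hω
        rw [hω]
    _ ≤ ∫ _, s ∂μ := integral_mono_ae integrable_condExp (integrable_const _) hvar
    _ = s := by simp

theorem condExp_sub_condExp_ae_eq_zero [CompleteSpace E] {m : MeasurableSpace Ω} (hm : m ≤ mΩ)
    [SigmaFinite (μ.trim hm)] {v : Ω → E} (hv : Integrable v μ) :
    μ[v - μ[v|m]|m] =ᵐ[μ] 0 := by
  filter_upwards [condExp_sub hv (integrable_condExp (m := m) (f := v)) m,
    condExp_condExp_of_le (f := v) le_rfl hm]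
    with ω hsub hcondExp
  simp [hsub, hcondExp]

end NormedSpace

section InnerProductSpace

variable [NormedAddCommGroup E] [InnerProductSpace ℝ E]

theorem MemLp.integrable_inner {f g : Ω → E} (hf : MemLp f 2 μ) (hg : MemLp g 2 μ) :
    Integrable (fun ω => ⟪f ω, g ω⟫) μ := by
  refine (L2.integrable_inner (𝕜 := ℝ) (hf.toLp f) (hg.toLp g)).congr ?_
  filter_upwards [hf.coeFn_toLp, hg.coeFn_toLp] with ω hfω hgω
  rw [hfω, hgω]

variable [CompleteSpace E]

theorem integral_inner_eq_zero_of_condExp_eq_zero [IsFiniteMeasure μ] {m : MeasurableSpace Ω}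
    (hm : m ≤ mΩ) {f g : Ω → E} (hf : StronglyMeasurable[m] f)
    (hfg : Integrable (fun ω => ⟪f ω, g ω⟫) μ) (hg : Integrable g μ) (hg0 : μ[g|m] =ᵐ[μ] 0) :
    ∫ ω, ⟪f ω, g ω⟫ ∂μ = 0 := by
  rw [← integral_condExp hm]
  refine integral_eq_zero_of_ae ?_
  filter_upwards [condExp_bilin_of_stronglyMeasurable_left (innerSL ℝ) hf hfg hg, hg0]
    with ω hω hω0
  exact hω.trans (by simp [hω0])

theorem integral_norm_sum_range_sq_eq [IsFiniteMeasure μ] (ℱ : Filtration ℕ mΩ)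
    {ξ : ℕ → Ω → E} {n : ℕ} (hξ : ∀ j < n, StronglyMeasurable[ℱ (j + 1)] (ξ j))
    (hξ2 : ∀ j < n, MemLp (ξ j) 2 μ) (hξ0 : ∀ j < n, μ[ξ j|ℱ j] =ᵐ[μ] 0) :
    ∫ ω, ‖∑ j ∈ range n, ξ j ω‖ ^ 2 ∂μ = ∑ j ∈ range n, ∫ ω, ‖ξ j ω‖ ^ 2 ∂μ := by
  induction n with
  | zero => simp
  | succ n ih =>
    have hS : StronglyMeasurable[ℱ n] (fun ω => ∑ j ∈ range n, ξ j ω) :=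
      Finset.stronglyMeasurable_fun_sum _ fun j hj =>
        (hξ j (by simp at hj; omega)).mono (ℱ.mono (by simp at hj; omega))
    have hS2 : MemLp (fun ω => ∑ j ∈ range n, ξ j ω) 2 μ :=
      memLp_finsetSum (range n) fun j hj => hξ2 j (by simp at hj; omega)
    have hξn2 := hξ2 n n.lt_succ_self
    have hcross : ∫ ω, ⟪∑ j ∈ range n, ξ j ω, ξ n ω⟫ ∂μ = 0 :=
      integral_inner_eq_zero_of_condExp_eq_zero (ℱ.le n) hS (hS2.integrable_inner hξn2)
        (hξn2.integrable one_le_two) (hξ0 n n.lt_succ_self)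
    have hSsq := hS2.integrable_norm_pow two_ne_zero
    have hinner := (hS2.integrable_inner hξn2).const_mul 2
    simp_rw [sum_range_succ, norm_add_sq_real]
    rw [integral_add (hSsq.fun_add hinner) (hξn2.integrable_norm_pow two_ne_zero),
      integral_add hSsq hinner, integral_const_mul, hcross,
      ih (fun j hj => hξ j (by omega)) (fun j hj => hξ2 j (by omega))
        (fun j hj => hξ0 j (by omega))]
    ring

theorem integral_norm_sum_range_sq_le [IsProbabilityMeasure μ] (ℱ : Filtration ℕ mΩ)
    {v : ℕ → Ω → E} {n : ℕ} {C s : ℝ}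
    (hv : ∀ j < n, StronglyMeasurable[ℱ (j + 1)] (v j)) (hv1 : ∀ j < n, Integrable (v j) μ)
    (hmean : ∀ j < n, ∀ᵐ ω ∂μ, ‖μ[v j|ℱ j] ω‖ ≤ C)
    (hvar2 : ∀ j < n, Integrable (fun ω => ‖v j ω - μ[v j|ℱ j] ω‖ ^ 2) μ)
    (hvar : ∀ j < n, ∫ ω, ‖v j ω - μ[v j|ℱ j] ω‖ ^ 2 ∂μ ≤ s) :
    ∫ ω, ‖∑ j ∈ range n, v j ω‖ ^ 2 ∂μ ≤ 2 * (n * C) ^ 2 + 2 * (n * s) := by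
  set g : ℕ → Ω → E := fun j => μ[v j|ℱ j]
  set ξ : ℕ → Ω → E := fun j => v j - g j
  have hξ : ∀ j < n, StronglyMeasurable[ℱ (j + 1)] (ξ j) := fun j hj =>
    (hv j hj).sub (stronglyMeasurable_condExp.mono (ℱ.mono j.le_succ))
  have hξ2 : ∀ j < n, MemLp (ξ j) 2 μ := fun j hj =>
    (memLp_two_iff_integrable_sq_norm ((hξ j hj).mono (ℱ.le _)).aestronglyMeasurable).2
      (hvar2 j hj)
  have hξ0 : ∀ j < n, μ[ξ j|ℱ j] =ᵐ[μ] 0 := fun j hj =>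
    condExp_sub_condExp_ae_eq_zero (ℱ.le j) (hv1 j hj)
  have hg2 : MemLp (fun ω => ∑ j ∈ range n, g j ω) 2 μ :=
    memLp_finsetSum (range n) fun j hj =>
      .of_bound (stronglyMeasurable_condExp.mono (ℱ.le j)).aestronglyMeasurable C
        (hmean j (by simpa using hj))
  have hg_le : ∀ᵐ ω ∂μ, ‖∑ j ∈ range n, g j ω‖ ≤ n * C := by
    have : ∀ᵐ ω ∂μ, ∀ j ∈ range n, ‖g j ω‖ ≤ C :=
      (Filter.eventually_all_finset _).2 fun j hj => hmean j (by simpa using hj)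
    filter_upwards [this] with ω hω
    calc _ ≤ ∑ j ∈ range n, ‖g j ω‖ := norm_sum_le _ _
      _ ≤ n * C := by simpa using sum_le_card_nsmul _ _ _ hω
  have hξ_sum : ∑ j ∈ range n, ∫ ω, ‖ξ j ω‖ ^ 2 ∂μ ≤ n * s := by
    simpa [ξ, g] using sum_le_card_nsmul (range n) _ _ fun j hj => hvar j (by simpa using hj)
  have hsplit : ∀ ω, ∑ j ∈ range n, v j ω = ∑ j ∈ range n, g j ω + ∑ j ∈ range n, ξ j ω := by
    simp [ξ]
  have hint_g := (hg2.integrable_norm_pow two_ne_zero).const_mul 2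
  have hξ_sum2 : MemLp (fun ω => ∑ j ∈ range n, ξ j ω) 2 μ :=
    memLp_finsetSum (range n) fun j hj => hξ2 j (by simpa using hj)
  have hint_ξ := (hξ_sum2.integrable_norm_pow two_ne_zero).const_mul 2
  calc ∫ ω, ‖∑ j ∈ range n, v j ω‖ ^ 2 ∂μ
      ≤ ∫ ω, 2 * ‖∑ j ∈ range n, g j ω‖ ^ 2 + 2 * ‖∑ j ∈ range n, ξ j ω‖ ^ 2 ∂μ :=
        integral_mono_of_nonneg (ae_of_all _ fun _ => by positivity) (hint_g.fun_add hint_ξ)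
          (ae_of_all _ fun ω => by simpa only [hsplit] using norm_add_sq_le_two_mul _ _)
    _ = 2 * ∫ ω, ‖∑ j ∈ range n, g j ω‖ ^ 2 ∂μ + 2 * ∫ ω, ‖∑ j ∈ range n, ξ j ω‖ ^ 2 ∂μ := by
        rw [integral_add hint_g hint_ξ, integral_const_mul, integral_const_mul]
    _ ≤ 2 * (n * C) ^ 2 + 2 * (n * s) := by
        rw [integral_norm_sum_range_sq_eq ℱ hξ hξ2 hξ0]
        gcongr
        exact integral_norm_sq_le_of_ae_norm_le hg_le

theorem integral_norm_sgd_iterate_sub_sq_le [IsProbabilityMeasure μ] (ℱ : Filtration ℕ mΩ)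
    {K : ℕ} {η c σ : ℝ} {θ : E} {g : E → E} {v x : ℕ → Ω → E}
    (hg : ∀ ψ, ‖g ψ - g θ‖ ≤ c) (hx0 : x 0 = fun _ => θ)
    (hx : ∀ k, 1 ≤ k → k ≤ K → x k = fun ω => x (k - 1) ω - η • v k ω)
    (hv : ∀ k, 1 ≤ k → k ≤ K → StronglyMeasurable[ℱ k] (v k))
    (hv1 : ∀ k, 1 ≤ k → k ≤ K → Integrable (v k) μ)
    (hvar2 : ∀ k, 1 ≤ k → k ≤ K → Integrable (fun ω => ‖v k ω - g (x (k - 1) ω)‖ ^ 2) μ)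
    (hmean : ∀ k, 1 ≤ k → k ≤ K → μ[v k|ℱ (k - 1)] =ᵐ[μ] fun ω => g (x (k - 1) ω))
    (hvar : ∀ k, 1 ≤ k → k ≤ K →
      ∀ᵐ ω ∂μ, μ[fun ω' => ‖v k ω' - g (x (k - 1) ω')‖ ^ 2|ℱ (k - 1)] ω ≤ σ ^ 2)
    {k : ℕ} (hk : k ≤ K) :
    ∫ ω, ‖x k ω - θ‖ ^ 2 ∂μ ≤ 2 * η ^ 2 * (K ^ 2 * (‖g θ‖ + c) ^ 2 + K * σ ^ 2) := by
  have hxk : ∀ ω, x k ω - θ = -(η • ∑ j ∈ range k, v (j + 1) ω) := fun ω => by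
    have := congrFun (eq_sub_smul_sum_range_of_eq_sub_smul (x := x) (v := v) (η := η) hx hk) ω
    simp only [this, hx0, Pi.sub_apply, Pi.smul_apply, Finset.sum_apply]
    abel
  have hstep : ∀ j < k, 1 ≤ j + 1 ∧ j + 1 ≤ K := fun j hj => ⟨by omega, by omega⟩
  have hmean' : ∀ j < k, μ[v (j + 1)|ℱ j] =ᵐ[μ] fun ω => g (x j ω) := fun j hj => by
    simpa using hmean (j + 1) (hstep j hj).1 (hstep j hj).2
  have hsum := integral_norm_sum_range_sq_le ℱ (v := fun j => v (j + 1)) (n := k)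
    (C := ‖g θ‖ + c) (s := σ ^ 2)
    (fun j hj => hv (j + 1) (hstep j hj).1 (hstep j hj).2)
    (fun j hj => hv1 (j + 1) (hstep j hj).1 (hstep j hj).2)
    (fun j hj => by
      filter_upwards [hmean' j hj] with ω hω
      rw [hω]
      linarith [norm_le_norm_add_norm_sub' (g (x j ω)) (g θ), hg (x j ω)])
    (fun j hj => by
      refine (hvar2 (j + 1) (hstep j hj).1 (hstep j hj).2).congr ?_
      filter_upwards [hmean' j hj] with ω hω
      simp [hω])
    (fun j hj => integral_norm_sub_condExp_sq_le (ℱ.le j) (hmean' j hj)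
      (by simpa using hvar (j + 1) (hstep j hj).1 (hstep j hj).2))
  calc ∫ ω, ‖x k ω - θ‖ ^ 2 ∂μ = η ^ 2 * ∫ ω, ‖∑ j ∈ range k, v (j + 1) ω‖ ^ 2 ∂μ := by
        simp_rw [hxk, norm_neg, norm_smul, mul_pow, Real.norm_eq_abs, sq_abs]
        exact integral_const_mul _ _
    _ ≤ η ^ 2 * (2 * (k * (‖g θ‖ + c)) ^ 2 + 2 * (k * σ ^ 2)) := by gcongr
    _ = 2 * η ^ 2 * (k ^ 2 * (‖g θ‖ + c) ^ 2 + k * σ ^ 2) := by ring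
    _ ≤ 2 * η ^ 2 * (K ^ 2 * (‖g θ‖ + c) ^ 2 + K * σ ^ 2) := by
        have : (k : ℝ) ≤ K := by exact_mod_cast hk
        gcongr

end InnerProductSpace

end MeasureTheory

theorem harmofl_drift_bound_convex_general
    {E : Type*} [NormedAddCommGroup E] [InnerProductSpace ℝ E] [CompleteSpace E]
    {Ω : Type*} {mΩ : MeasurableSpace Ω} (P : Measure Ω) [IsProbabilityMeasure P]
    (N K : ℕ) (hN : 1 ≤ N) (hK : 2 ≤ K)
    (ηl : ℝ) (θ : E)
    (F : Fin N → E → ℝ)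
    (G B β ε σ : ℝ)
    (Fstar : ℝ)
    -- (i) relaxed bounded gradient dissimilarity at θ (convex case)
    (hdissim : ((1 : ℝ) / N) * ∑ i, ‖gradient (F i) θ‖ ^ 2 ≤
        G ^ 2 + 2 * β * B ^ 2 * (((1 : ℝ) / N) * ∑ i, F i θ - Fstar))
    -- (ii) bounded gradient difference
    (hgrad : ∀ (i : Fin N) (ψ : E),
        ‖gradient (F i) ψ - gradient (F i) θ‖ ≤ (((N : ℝ) - 1) / N) * ε)
    -- filtration and stochastic-gradient iterates
    (ℱ : Filtration ℕ mΩ)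
    (Gr : Fin N → ℕ → Ω → E) (θit : Fin N → ℕ → Ω → E)
    (h0 : ∀ i, θit i 0 = fun _ => θ)
    (hrec : ∀ (i : Fin N) (k : ℕ), 1 ≤ k → k ≤ K →
        θit i k = fun ω => θit i (k - 1) ω - ηl • Gr i k ω)
    (hmeas : ∀ (i : Fin N) (k : ℕ), 1 ≤ k → k ≤ K →
        StronglyMeasurable[ℱ k] (Gr i k))
    (hint : ∀ (i : Fin N) (k : ℕ), 1 ≤ k → k ≤ K → Integrable (Gr i k) P)
    (hintsq : ∀ (i : Fin N) (k : ℕ), 1 ≤ k → k ≤ K →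
        Integrable (fun ω => ‖Gr i k ω - gradient (F i) (θit i (k - 1) ω)‖ ^ 2) P)
    -- unbiasedness: E[G_{i,k} | ℱ_{k−1}] = ∇F_i(θ_{i,k−1}) a.s.
    (hunbiased : ∀ (i : Fin N) (k : ℕ), 1 ≤ k → k ≤ K →
        P[Gr i k | ℱ (k - 1)] =ᵐ[P] fun ω => gradient (F i) (θit i (k - 1) ω))
    -- bounded conditional variance
    (hvar : ∀ (i : Fin N) (k : ℕ), 1 ≤ k → k ≤ K →
        ∀ᵐ ω ∂P,
          (P[fun ω' => ‖Gr i k ω' - gradient (F i) (θit i (k - 1) ω')‖ ^ 2 | ℱ (k - 1)]) ω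
            ≤ σ ^ 2) :
    ((1 : ℝ) / (K * N)) * ∑ k ∈ Finset.Icc 1 K, ∑ i, ∫ ω, ‖θit i k ω - θ‖ ^ 2 ∂P ≤
      4 * (K : ℝ) ^ 2 * ηl ^ 2 * G ^ 2
        + 8 * β * (K : ℝ) ^ 2 * ηl ^ 2 * B ^ 2 * (((1 : ℝ) / N) * ∑ i, F i θ - Fstar)
        + 4 * (K : ℝ) ^ 2 * ηl ^ 2 * ε ^ 2 * ((N : ℝ) - 1) ^ 2 / (N : ℝ) ^ 2
        + 2 * (K : ℝ) * ηl ^ 2 * σ ^ 2 := by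
  set c := ((N : ℝ) - 1) / N * ε
  have hclient : ∀ k ∈ Icc 1 K, ∀ i, ∫ ω, ‖θit i k ω - θ‖ ^ 2 ∂P ≤
      2 * ηl ^ 2 * (K ^ 2 * (‖gradient (F i) θ‖ + c) ^ 2 + K * σ ^ 2) := fun k hk i =>
    integral_norm_sgd_iterate_sub_sq_le ℱ (hgrad i) (h0 i) (hrec i) (hmeas i) (hint i)
      (hintsq i) (hunbiased i) (hvar i) (mem_Icc.1 hk).2
  have hc : c ^ 2 = ε ^ 2 * ((N : ℝ) - 1) ^ 2 / (N : ℝ) ^ 2 := by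
    rw [mul_pow, div_pow]
    ring
  have hN0 : (N : ℝ) ≠ 0 := by positivity
  calc ((1 : ℝ) / (K * N)) * ∑ k ∈ Icc 1 K, ∑ i, ∫ ω, ‖θit i k ω - θ‖ ^ 2 ∂P
      ≤ 1 / N * ∑ i, 2 * ηl ^ 2 * (K ^ 2 * (‖gradient (F i) θ‖ + c) ^ 2 + K * σ ^ 2) :=
        mean_le_of_forall_le (by omega) hclient
    _ ≤ 1 / N * ∑ i, 2 * ηl ^ 2 * (K ^ 2 * (2 * (‖gradient (F i) θ‖ ^ 2 + c ^ 2)) + K * σ ^ 2) := by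
        gcongr
        exact add_sq_le
    _ = 4 * K ^ 2 * ηl ^ 2 * (1 / N * ∑ i, ‖gradient (F i) θ‖ ^ 2)
          + 4 * K ^ 2 * ηl ^ 2 * c ^ 2 + 2 * K * ηl ^ 2 * σ ^ 2 := by
        simp only [mul_add, sum_add_distrib, ← mul_sum, sum_const, card_univ, Fintype.card_fin,
          nsmul_eq_mul]
        field_simp
        ring
    _ ≤ _ := by
        rw [hc]
        linear_combination
          mul_le_mul_of_nonneg_left hdissim (by positivity : (0 : ℝ) ≤ 4 * K ^ 2 * ηl ^ 2)

/-- HarmoFL Theorem 1, convex case (with effective step-size substituted, so that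
`η̃²/η_g² = K²η_l²`): under the relaxed bounded gradient dissimilarity
`(1/N)∑‖∇Fᵢ(θ)‖² ≤ G² + 2βB²(F(θ) − F*)` (where `F* = inf F` is attained), bounded
gradient difference `((N−1)/N)·ε`, and unbiased stochastic gradients with conditional
variance bounded by `σ²`, the overall drift satisfies
`Γ ≤ 4K²η_l²G² + 8βK²η_l²B²(F(θ) − F*) + 4K²η_l²ε²(N−1)²/N² + 2Kη_l²σ²`. -/
theorem harmofl_drift_bound_convex
    {E : Type*} [NormedAddCommGroup E] [InnerProductSpace ℝ E] [CompleteSpace E]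
    {Ω : Type*} {mΩ : MeasurableSpace Ω} (P : Measure Ω) [IsProbabilityMeasure P]
    (N K : ℕ) (hN : 1 ≤ N) (hK : 2 ≤ K)
    (ηl : ℝ) (hηl : 0 < ηl) (θ : E)
    (F : Fin N → E → ℝ) (hF : ∀ i, Differentiable ℝ (F i))
    (G B β ε σ : ℝ) (hG : 0 ≤ G) (hB : 1 ≤ B) (hβ : 0 < β) (hε : 0 ≤ ε)
    -- F attains its infimum F*
    (Fstar : ℝ)
    (hFstar : IsGLB (Set.range fun x => ((1 : ℝ) / N) * ∑ i, F i x) Fstar)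
    (hattain : ∃ x : E, ((1 : ℝ) / N) * ∑ i, F i x = Fstar)
    -- (i) relaxed bounded gradient dissimilarity at θ (convex case)
    (hdissim : ((1 : ℝ) / N) * ∑ i, ‖gradient (F i) θ‖ ^ 2 ≤
        G ^ 2 + 2 * β * B ^ 2 * (((1 : ℝ) / N) * ∑ i, F i θ - Fstar))
    -- (ii) bounded gradient difference
    (hgrad : ∀ (i : Fin N) (ψ : E),
        ‖gradient (F i) ψ - gradient (F i) θ‖ ≤ (((N : ℝ) - 1) / N) * ε)
    -- filtration and stochastic-gradient iterates
    (ℱ : Filtration ℕ mΩ)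
    (Gr : Fin N → ℕ → Ω → E) (θit : Fin N → ℕ → Ω → E)
    (h0 : ∀ i, θit i 0 = fun _ => θ)
    (hrec : ∀ (i : Fin N) (k : ℕ), 1 ≤ k → k ≤ K →
        θit i k = fun ω => θit i (k - 1) ω - ηl • Gr i k ω)
    (hmeas : ∀ (i : Fin N) (k : ℕ), 1 ≤ k → k ≤ K →
        StronglyMeasurable[ℱ k] (Gr i k))
    (hint : ∀ (i : Fin N) (k : ℕ), 1 ≤ k → k ≤ K → Integrable (Gr i k) P)
    (hintsq : ∀ (i : Fin N) (k : ℕ), 1 ≤ k → k ≤ K →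
        Integrable (fun ω => ‖Gr i k ω - gradient (F i) (θit i (k - 1) ω)‖ ^ 2) P)
    -- unbiasedness: E[G_{i,k} | ℱ_{k−1}] = ∇F_i(θ_{i,k−1}) a.s.
    (hunbiased : ∀ (i : Fin N) (k : ℕ), 1 ≤ k → k ≤ K →
        P[Gr i k | ℱ (k - 1)] =ᵐ[P] fun ω => gradient (F i) (θit i (k - 1) ω))
    -- bounded conditional variance
    (hvar : ∀ (i : Fin N) (k : ℕ), 1 ≤ k → k ≤ K →
        ∀ᵐ ω ∂P,
          (P[fun ω' => ‖Gr i k ω' - gradient (F i) (θit i (k - 1) ω')‖ ^ 2 | ℱ (k - 1)]) ω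
            ≤ σ ^ 2) :
    ((1 : ℝ) / (K * N)) * ∑ k ∈ Finset.Icc 1 K, ∑ i, ∫ ω, ‖θit i k ω - θ‖ ^ 2 ∂P ≤
      4 * (K : ℝ) ^ 2 * ηl ^ 2 * G ^ 2
        + 8 * β * (K : ℝ) ^ 2 * ηl ^ 2 * B ^ 2 * (((1 : ℝ) / N) * ∑ i, F i θ - Fstar)
        + 4 * (K : ℝ) ^ 2 * ηl ^ 2 * ε ^ 2 * ((N : ℝ) - 1) ^ 2 / (N : ℝ) ^ 2
        + 2 * (K : ℝ) * ηl ^ 2 * σ ^ 2 :=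
  harmofl_drift_bound_convex_general P N K hN hK ηl θ F G B β ε σ Fstar hdissim hgrad ℱ Gr θit h0
    hrec hmeas hint hintsq hunbiased hvar
end

section
/- Let E be a real inner product space, K ≥ 2 a natural number, η_l > 0, θ ∈ E, and let F_i : E → ℝ be a differentiable function satisfying ‖∇F_i(ψ) − ∇F_i(θ)‖ ≤ ((N−1)/N)·ε for every ψ ∈ E, where N ≥ 1 and ε ≥ 0. Define the full-gradient local iterates θ_{i,0} = θ and θ_{i,k} = θ_{i,k−1} − η_l·∇F_i(θ_{i,k−1}) for k ≥ 1. Then for every k with 1 ≤ k ≤ K, ‖θ_{i,k} − θ‖² ≤ 4K²η_l²·‖∇F_i(θ)‖² + 4K²η_l²ε²(N−1)²/N². -/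
/-- Per-client unrolled drift bound with exact gradients: if `Fi` is differentiable with
`‖∇Fi(ψ) − ∇Fi(θ)‖ ≤ ((N−1)/N)·ε` for all `ψ`, and the local iterates follow full-gradient
descent from `θ` with step `η_l`, then for every `1 ≤ k ≤ K` (`K ≥ 2`),
`‖θ_{i,k} − θ‖² ≤ 4K²η_l²‖∇Fi(θ)‖² + 4K²η_l²ε²(N−1)²/N²`. -/
theorem per_client_unrolled_drift_bound
    {E : Type*} [NormedAddCommGroup E] [InnerProductSpace ℝ E] [CompleteSpace E]
    (K N : ℕ) (hK : 2 ≤ K) (hN : 1 ≤ N)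
    (ηl : ℝ) (hηl : 0 < ηl) (ε : ℝ) (hε : 0 ≤ ε) (θ : E)
    (Fi : E → ℝ) (hFi : Differentiable ℝ Fi)
    (hgrad : ∀ ψ : E, ‖gradient Fi ψ - gradient Fi θ‖ ≤ (((N : ℝ) - 1) / N) * ε)
    (θit : ℕ → E) (h0 : θit 0 = θ)
    (hrec : ∀ k : ℕ, θit (k + 1) = θit k - ηl • gradient Fi (θit k)) :
    ∀ k, 1 ≤ k → k ≤ K →
      ‖θit k - θ‖ ^ 2 ≤
        4 * (K : ℝ) ^ 2 * ηl ^ 2 * ‖gradient Fi θ‖ ^ 2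
          + 4 * (K : ℝ) ^ 2 * ηl ^ 2 * ε ^ 2 * ((N : ℝ) - 1) ^ 2 / (N : ℝ) ^ 2 := by
  set G := ‖gradient Fi θ‖ with hG
  set c := (((N : ℝ) - 1) / N) * ε with hc
  have hNpos : (0 : ℝ) < N := by exact_mod_cast hN
  have hc0 : 0 ≤ c := by
    apply mul_nonneg _ hε
    apply div_nonneg _ hNpos.le
    have : (1 : ℝ) ≤ (N : ℝ) := by exact_mod_cast hN
    linarith
  have hG0 : 0 ≤ G := norm_nonneg _
  -- linear bound by induction
  have key : ∀ k : ℕ, ‖θit k - θ‖ ≤ k * ηl * (G + c) := by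
    intro k
    induction k with
    | zero => simp [h0]
    | succ n ih =>
      have hgn : ‖gradient Fi (θit n)‖ ≤ G + c := by
        calc ‖gradient Fi (θit n)‖
            ≤ ‖gradient Fi (θit n) - gradient Fi θ‖ + ‖gradient Fi θ‖ := by
              simpa using norm_add_le (gradient Fi (θit n) - gradient Fi θ) (gradient Fi θ)
          _ ≤ c + G := add_le_add (hgrad _) le_rfl
          _ = G + c := by ring
      have : θit (n + 1) - θ = (θit n - θ) - ηl • gradient Fi (θit n) := by
        rw [hrec n]; abel
      calc ‖θit (n + 1) - θ‖
          ≤ ‖θit n - θ‖ + ‖ηl • gradient Fi (θit n)‖ := by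
            rw [this]; exact norm_sub_le _ _
        _ ≤ n * ηl * (G + c) + ηl * (G + c) := by
            apply add_le_add ih
            rw [norm_smul, Real.norm_eq_abs, abs_of_pos hηl]
            exact mul_le_mul_of_nonneg_left hgn hηl.le
        _ = (n + 1 : ℕ) * ηl * (G + c) := by push_cast; ring
  intro k hk1 hkK
  have h1 : ‖θit k - θ‖ ≤ K * ηl * (G + c) := by
    refine (key k).trans ?_
    have hkK' : (k : ℝ) ≤ K := by exact_mod_cast hkK
    have : 0 ≤ ηl * (G + c) := mul_nonneg hηl.le (by linarith)
    nlinarith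
  have hsq : ‖θit k - θ‖ ^ 2 ≤ (K * ηl * (G + c)) ^ 2 := by
    apply sq_le_sq' _ h1
    have := norm_nonneg (θit k - θ)
    linarith
  refine hsq.trans ?_
  have hceq : c ^ 2 = ε ^ 2 * ((N : ℝ) - 1) ^ 2 / (N : ℝ) ^ 2 := by
    rw [hc]; field_simp
  have hKpos : (0 : ℝ) ≤ (K : ℝ) := by positivity
  have h2 : (K * ηl * (G + c)) ^ 2 ≤ 4 * (K : ℝ) ^ 2 * ηl ^ 2 * G ^ 2
      + 4 * (K : ℝ) ^ 2 * ηl ^ 2 * c ^ 2 := by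
    nlinarith [sq_nonneg (G - c), sq_nonneg (G + c), sq_nonneg ((K : ℝ) * ηl), sq_nonneg G, sq_nonneg c]
  rw [hceq] at h2
  refine h2.trans_eq ?_
  ring
end

section
/- Let E be a real inner product space, N ≥ 1 and K ≥ 2 natural numbers, η_l > 0, and θ ∈ E. Let F_1, …, F_N : E → ℝ be differentiable functions and set F = (1/N)·∑_{i=1}^N F_i. Assume: (i) (1/N)·∑_{i=1}^N ‖∇F_i(θ)‖² ≤ G² + B²·‖∇F(θ)‖² for constants G ≥ 0, B ≥ 1; (ii) ‖∇F_i(ψ) − ∇F_i(θ)‖ ≤ ((N−1)/N)·ε for every i and every ψ ∈ E, where ε ≥ 0. Define for each client i the full-gradient local iterates θ_{i,0} = θ and θ_{i,k} = θ_{i,k−1} − η_l·∇F_i(θ_{i,k−1}). Then the overall drift Γ := (1/(KN))·∑_{k=1}^K ∑_{i=1}^N ‖θ_{i,k} − θ‖² satisfies Γ ≤ 4K²η_l²·(G² + B²‖∇F(θ)‖²) + 4K²η_l²ε²(N−1)²/N². -/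
/-- Deterministic (exact-gradient) form of HarmoFL Theorem 1 (non-convex case):
under bounded gradient dissimilarity and bounded gradient difference, the overall drift
`Γ = (1/(KN))·∑_{k=1}^K ∑_{i=1}^N ‖θ_{i,k} − θ‖²` of full-gradient local updates satisfies
`Γ ≤ 4K²η_l²(G² + B²‖∇F(θ)‖²) + 4K²η_l²ε²(N−1)²/N²`. -/
theorem deterministic_drift_bound
    {E : Type*} [NormedAddCommGroup E] [InnerProductSpace ℝ E] [CompleteSpace E]
    (N K : ℕ) (hN : 1 ≤ N) (hK : 2 ≤ K)
    (ηl : ℝ) (hηl : 0 < ηl) (θ : E)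
    (F : Fin N → E → ℝ) (hF : ∀ i, Differentiable ℝ (F i))
    (G B ε : ℝ) (hG : 0 ≤ G) (hB : 1 ≤ B) (hε : 0 ≤ ε)
    (hdissim : ((1 : ℝ) / N) * ∑ i, ‖gradient (F i) θ‖ ^ 2 ≤
        G ^ 2 + B ^ 2 * ‖gradient (fun x => ((1 : ℝ) / N) * ∑ i, F i x) θ‖ ^ 2)
    (hgrad : ∀ (i : Fin N) (ψ : E),
        ‖gradient (F i) ψ - gradient (F i) θ‖ ≤ (((N : ℝ) - 1) / N) * ε)
    (θit : Fin N → ℕ → E) (h0 : ∀ i, θit i 0 = θ)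
    (hrec : ∀ (i : Fin N) (k : ℕ),
        θit i (k + 1) = θit i k - ηl • gradient (F i) (θit i k)) :
    ((1 : ℝ) / (K * N)) * ∑ k ∈ Finset.Icc 1 K, ∑ i, ‖θit i k - θ‖ ^ 2 ≤
      4 * (K : ℝ) ^ 2 * ηl ^ 2 *
          (G ^ 2 + B ^ 2 * ‖gradient (fun x => ((1 : ℝ) / N) * ∑ i, F i x) θ‖ ^ 2)
        + 4 * (K : ℝ) ^ 2 * ηl ^ 2 * ε ^ 2 * ((N : ℝ) - 1) ^ 2 / (N : ℝ) ^ 2 := by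
  have hNpos : (0 : ℝ) < N := by exact_mod_cast hN
  have hKpos : (0 : ℝ) < K := by positivity
  set c : ℝ := (((N : ℝ) - 1) / N) * ε with hc
  have hc0 : 0 ≤ c := by
    apply mul_nonneg _ hε
    apply div_nonneg _ hNpos.le
    have : (1 : ℝ) ≤ (N : ℝ) := by exact_mod_cast hN
    linarith
  set g : Fin N → ℝ := fun i => ‖gradient (F i) θ‖ with hgdef
  have hg0 : ∀ i, 0 ≤ g i := fun i => norm_nonneg _
  -- gradient norm bound at any point
  have hgb : ∀ (i : Fin N) (ψ : E), ‖gradient (F i) ψ‖ ≤ g i + c := by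
    intro i ψ
    have := hgrad i ψ
    have h := norm_sub_norm_le (gradient (F i) ψ) (gradient (F i) θ)
    simp only [hgdef]
    linarith
  -- drift bound by induction
  have hdrift : ∀ (i : Fin N) (k : ℕ), ‖θit i k - θ‖ ≤ ηl * k * (g i + c) := by
    intro i k
    induction k with
    | zero => simp [h0 i]
    | succ k ih =>
      have : θit i (k + 1) - θ = (θit i k - θ) - ηl • gradient (F i) (θit i k) := by
        rw [hrec i k]; abel
      rw [this]
      have h1 : ‖ηl • gradient (F i) (θit i k)‖ = ηl * ‖gradient (F i) (θit i k)‖ := by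
        rw [norm_smul, Real.norm_eq_abs, abs_of_pos hηl]
      have h2 := norm_sub_le (θit i k - θ) (ηl • gradient (F i) (θit i k))
      have h3 : ηl * ‖gradient (F i) (θit i k)‖ ≤ ηl * (g i + c) :=
        mul_le_mul_of_nonneg_left (hgb i (θit i k)) hηl.le
      have h4 : ηl * ((k : ℝ) + 1) * (g i + c) = ηl * k * (g i + c) + ηl * (g i + c) := by ring
      push_cast
      rw [h4]
      linarith
  -- squared drift bound for k ≤ K
  have hsq : ∀ (i : Fin N), ∀ k ∈ Finset.Icc 1 K,
      ‖θit i k - θ‖ ^ 2 ≤ 2 * ηl ^ 2 * (K : ℝ) ^ 2 * ((g i) ^ 2 + c ^ 2) := by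
    intro i k hk
    have hkK : (k : ℝ) ≤ K := by
      exact_mod_cast (Finset.mem_Icc.mp hk).2
    have h1 : ‖θit i k - θ‖ ≤ ηl * K * (g i + c) := by
      refine (hdrift i k).trans ?_
      exact mul_le_mul_of_nonneg_right
        (mul_le_mul_of_nonneg_left hkK hηl.le) (by have := hg0 i; linarith)
    have h2 : ‖θit i k - θ‖ ^ 2 ≤ (ηl * K * (g i + c)) ^ 2 :=
      pow_le_pow_left₀ (norm_nonneg _) h1 2
    have h3 : (g i + c) ^ 2 ≤ 2 * ((g i) ^ 2 + c ^ 2) := by nlinarith [sq_nonneg (g i - c)]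
    calc ‖θit i k - θ‖ ^ 2 ≤ (ηl * K * (g i + c)) ^ 2 := h2
      _ = ηl ^ 2 * (K : ℝ) ^ 2 * (g i + c) ^ 2 := by ring
      _ ≤ ηl ^ 2 * (K : ℝ) ^ 2 * (2 * ((g i) ^ 2 + c ^ 2)) :=
          mul_le_mul_of_nonneg_left h3 (by positivity)
      _ = 2 * ηl ^ 2 * (K : ℝ) ^ 2 * ((g i) ^ 2 + c ^ 2) := by ring
  -- sum over i
  have hsumi : ∀ k ∈ Finset.Icc 1 K, ∑ i, ‖θit i k - θ‖ ^ 2 ≤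
      2 * ηl ^ 2 * (K : ℝ) ^ 2 * ((∑ i, (g i) ^ 2) + N * c ^ 2) := by
    intro k hk
    calc ∑ i, ‖θit i k - θ‖ ^ 2
        ≤ ∑ i, 2 * ηl ^ 2 * (K : ℝ) ^ 2 * ((g i) ^ 2 + c ^ 2) :=
          Finset.sum_le_sum fun i _ => hsq i k hk
      _ = 2 * ηl ^ 2 * (K : ℝ) ^ 2 * ((∑ i, (g i) ^ 2) + N * c ^ 2) := by
          rw [← Finset.mul_sum, Finset.sum_add_distrib, Finset.sum_const,
            Finset.card_univ, Fintype.card_fin, nsmul_eq_mul]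
  -- sum over k
  have hsumk : ∑ k ∈ Finset.Icc 1 K, ∑ i, ‖θit i k - θ‖ ^ 2 ≤
      (K : ℝ) * (2 * ηl ^ 2 * (K : ℝ) ^ 2 * ((∑ i, (g i) ^ 2) + N * c ^ 2)) := by
    calc ∑ k ∈ Finset.Icc 1 K, ∑ i, ‖θit i k - θ‖ ^ 2
        ≤ ∑ k ∈ Finset.Icc 1 K, 2 * ηl ^ 2 * (K : ℝ) ^ 2 * ((∑ i, (g i) ^ 2) + N * c ^ 2) :=
          Finset.sum_le_sum hsumi
      _ = (K : ℝ) * (2 * ηl ^ 2 * (K : ℝ) ^ 2 * ((∑ i, (g i) ^ 2) + N * c ^ 2)) := by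
          rw [Finset.sum_const, Nat.card_Icc, nsmul_eq_mul]
          push_cast
          ring
  set D : ℝ := G ^ 2 + B ^ 2 * ‖gradient (fun x => ((1 : ℝ) / N) * ∑ i, F i x) θ‖ ^ 2 with hD
  have hD0 : 0 ≤ D := by positivity
  have key : ((1 : ℝ) / (K * N)) * ∑ k ∈ Finset.Icc 1 K, ∑ i, ‖θit i k - θ‖ ^ 2 ≤
      2 * ηl ^ 2 * (K : ℝ) ^ 2 * (((1 : ℝ) / N) * (∑ i, (g i) ^ 2) + c ^ 2) := by
    rw [div_mul_eq_mul_div, one_mul, div_le_iff₀ (by positivity)]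
    calc ∑ k ∈ Finset.Icc 1 K, ∑ i, ‖θit i k - θ‖ ^ 2
        ≤ (K : ℝ) * (2 * ηl ^ 2 * (K : ℝ) ^ 2 * ((∑ i, (g i) ^ 2) + N * c ^ 2)) := hsumk
      _ = 2 * ηl ^ 2 * (K : ℝ) ^ 2 * (((1 : ℝ) / N) * (∑ i, (g i) ^ 2) + c ^ 2) * (K * N) := by
          field_simp
  refine key.trans ?_
  have hgsum : ((1 : ℝ) / N) * (∑ i, (g i) ^ 2) ≤ D := hdissim
  have hc2 : c ^ 2 = ε ^ 2 * ((N : ℝ) - 1) ^ 2 / (N : ℝ) ^ 2 := by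
    rw [hc]; field_simp
  have h2 : 2 * ηl ^ 2 * (K : ℝ) ^ 2 * (((1 : ℝ) / N) * (∑ i, (g i) ^ 2) + c ^ 2) ≤
      2 * ηl ^ 2 * (K : ℝ) ^ 2 * (D + c ^ 2) := by
    apply mul_le_mul_of_nonneg_left _ (by positivity)
    linarith
  refine h2.trans ?_
  rw [hc2]
  have hpos : (0 : ℝ) ≤ ηl ^ 2 * (K : ℝ) ^ 2 := by positivity
  have hcc : (0 : ℝ) ≤ ε ^ 2 * ((N : ℝ) - 1) ^ 2 / (N : ℝ) ^ 2 := by positivity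
  have e1 : 2 * ηl ^ 2 * (K : ℝ) ^ 2 * (D + ε ^ 2 * ((N : ℝ) - 1) ^ 2 / (N : ℝ) ^ 2)
      = 2 * ((ηl ^ 2 * (K : ℝ) ^ 2) * D) + 2 * ((ηl ^ 2 * (K : ℝ) ^ 2) * (ε ^ 2 * ((N : ℝ) - 1) ^ 2 / (N : ℝ) ^ 2)) := by ring
  have e2 : 4 * (K : ℝ) ^ 2 * ηl ^ 2 * D + 4 * (K : ℝ) ^ 2 * ηl ^ 2 * ε ^ 2 * ((N : ℝ) - 1) ^ 2 / (N : ℝ) ^ 2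
      = 4 * ((ηl ^ 2 * (K : ℝ) ^ 2) * D) + 4 * ((ηl ^ 2 * (K : ℝ) ^ 2) * (ε ^ 2 * ((N : ℝ) - 1) ^ 2 / (N : ℝ) ^ 2)) := by ring
  rw [e1, e2]
  have t1 := mul_nonneg hpos hD0
  have t2 := mul_nonneg hpos hcc
  clear_value D c g
  linarith
end
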